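/- arXiv:1810.02288 — 5 statements merged into one kernel-verified Lean document; each statement's English description precedes it below -/
import Mathlib

section
/- Let n ≥ 2, p ≥ 1, ε ∈ [0,1], and let f : ℝⁿ → ℝ be a nonzero nonnegative continuous function with compact support such that h(ξ) := ∫_{ℝⁿ} f(z) ⟨ξ,z⟩_ε^p dz > 0 for every ξ ∈ S^{n−1}. Then ∫_{ℝⁿ} f(x) · ( (1/(n+p)) ∫_{S^{n−1}} h(ξ)^{−(n+p)/p} ⟨x,ξ⟩_ε^p dξ ) dx = (n/(n+p)) · vol( { y ∈ ℝⁿ : ∫_{ℝⁿ} f(z) ⟨y,z⟩_ε^p dz ≤ 1 } ), where vol denotes Lebesgue measure. -/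
/-!
Let `h(y) = ∫ f(z) ⟨y,z⟩_ε^p dz`; it is continuous and positively `p`-homogeneous. By Fubini the
left-hand side equals `(n+p)⁻¹ ∫_{S^{n-1}} h(ξ)^{-(n+p)/p} h(ξ) dξ = (n+p)⁻¹ ∫ h^{-n/p}`. On the
other hand `{h ≤ 1}` is the star body with radial function `h^{-1/p}`, so in polar coordinates its
volume is `n⁻¹ ∫_{S^{n-1}} h^{-n/p}`.
-/

open MeasureTheory Real
open scoped RealInnerProductSpace

/-- The asymmetric bracket `⟨x,y⟩_ε^p` applied to a real number `s = ⟨x,y⟩`: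
`(1-ε) (max{s,0})^p + ε (max{-s,0})^p`. -/
noncomputable def epsPow (eps p s : ℝ) : ℝ :=
  (1 - eps) * (max s 0) ^ p + eps * (max (-s) 0) ^ p

open Metric Set

lemma epsPow_mul {eps p r : ℝ} (hr : 0 ≤ r) (s : ℝ) :
    epsPow eps p (r * s) = r ^ p * epsPow eps p s := by
  have hmax : ∀ t, max (r * t) 0 ^ p = r ^ p * max t 0 ^ p := fun t => by
    rw [← mul_rpow hr (le_max_right _ _), mul_max_of_nonneg _ _ hr, mul_zero]
  rw [epsPow, epsPow, ← mul_neg, hmax, hmax]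
  ring

lemma continuous_epsPow {eps p : ℝ} (hp : 0 ≤ p) : Continuous (epsPow eps p) := by
  unfold epsPow
  fun_prop (disch := exact hp)

/-- `h(M_{ε,p} f, y)^p` in the paper's notation: the `p`-th power of the support function of the
asymmetric `L_p` moment body of `f`. -/
noncomputable def lpMoment {E : Type*} [NormedAddCommGroup E] [InnerProductSpace ℝ E]
    [MeasurableSpace E] (μ : Measure E) (eps p : ℝ) (f : E → ℝ) (y : E) : ℝ :=
  ∫ z, f z * epsPow eps p ⟪y, z⟫ ∂μ

section lpMoment

variable {E : Type*} [NormedAddCommGroup E] [InnerProductSpace ℝ E] [MeasurableSpace E]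
  {μ : Measure E} {eps p : ℝ} {f : E → ℝ}

lemma lpMoment_smul {r : ℝ} (hr : 0 ≤ r) (y : E) :
    lpMoment μ eps p f (r • y) = r ^ p * lpMoment μ eps p f y := by
  simp only [lpMoment, real_inner_smul_left, epsPow_mul hr, ← integral_const_mul]
  exact integral_congr_ae (.of_forall fun z => mul_left_comm _ _ _)

variable [BorelSpace E] [FiniteDimensional ℝ E]

lemma continuous_lpMoment [IsLocallyFiniteMeasure μ] (hp : 0 ≤ p) (hf : Continuous f)
    (hsupp : HasCompactSupport f) : Continuous (lpMoment μ eps p f) := by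
  have hsupp_int : ∀ y, lpMoment μ eps p f y = ∫ z in tsupport f, f z * epsPow eps p ⟪y, z⟫ ∂μ :=
    fun y => (setIntegral_eq_integral_of_forall_compl_eq_zero fun z hz => by
      rw [image_eq_zero_of_notMem_tsupport hz, zero_mul]).symm
  simp only [funext hsupp_int]
  exact continuous_parametric_integral_of_continuous
    (by have := continuous_epsPow (eps := eps) hp; fun_prop) hsupp

lemma integral_mul_integral_epsPow_eq_integral_mul_lpMoment [SFinite μ]
    [IsFiniteMeasureOnCompacts μ] (hp : 0 ≤ p) (hf : Continuous f) (hsupp : HasCompactSupport f)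
    (ν : Measure (sphere (0 : E) 1)) [IsFiniteMeasure ν] {w : sphere (0 : E) 1 → ℝ}
    (hw : Continuous w) :
    ∫ x, f x * ∫ ξ, w ξ * epsPow eps p ⟪x, (ξ : E)⟫ ∂ν ∂μ =
      ∫ ξ, w ξ * lpMoment μ eps p f ξ ∂ν := by
  have hint : Integrable (fun q : E × sphere (0 : E) 1 =>
      f q.1 * (w q.2 * epsPow eps p ⟪q.1, (q.2 : E)⟫)) (μ.prod ν) := by
    refine Continuous.integrable_of_hasCompactSupport
      (by have := continuous_epsPow (eps := eps) hp; fun_prop) ?_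
    refine HasCompactSupport.intro (hsupp.prod isCompact_univ) fun q hq => ?_
    rw [image_eq_zero_of_notMem_tsupport fun h => hq ⟨h, mem_univ _⟩, zero_mul]
  calc ∫ x, f x * ∫ ξ, w ξ * epsPow eps p ⟪x, (ξ : E)⟫ ∂ν ∂μ
      = ∫ x, ∫ ξ, f x * (w ξ * epsPow eps p ⟪x, (ξ : E)⟫) ∂ν ∂μ := by
        simp only [integral_const_mul]
    _ = ∫ ξ, ∫ x, f x * (w ξ * epsPow eps p ⟪x, (ξ : E)⟫) ∂μ ∂ν := integral_integral_swap hint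
    _ = ∫ ξ, w ξ * lpMoment μ eps p f ξ ∂ν := by
        simp only [mul_left_comm (f _), integral_const_mul, lpMoment, real_inner_comm]

end lpMoment

lemma MeasureTheory.Measure.volumeIoiPow_apply_Iic (n : ℕ) (x : Ioi (0 : ℝ)) :
    Measure.volumeIoiPow n (Iic x) = ENNReal.ofReal (x.1 ^ (n + 1) / (n + 1)) := by
  have hx : Measure.volumeIoiPow n {x} = 0 := withDensity_absolutelyContinuous _ _ <| by
    rw [comap_subtype_coe_apply measurableSet_Ioi, image_singleton]
    exact measure_singleton _
  rw [← measure_congr (Iio_ae_eq_Iic' hx), Measure.volumeIoiPow_apply_Iio]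

section Polar

variable {E : Type*} [NormedAddCommGroup E] [NormedSpace ℝ E] [FiniteDimensional ℝ E]
  [Nontrivial E] [MeasurableSpace E] [BorelSpace E] (μ : Measure E) [μ.IsAddHaarMeasure]

theorem measure_eq_lintegral_toSphere_of_radial {S : Set E} (hS : MeasurableSet S)
    {ρ : sphere (0 : E) 1 → ℝ} (hρ : ∀ ξ, 0 < ρ ξ)
    (hray : ∀ ξ : sphere (0 : E) 1, ∀ r : ℝ, 0 < r → (r • (ξ : E) ∈ S ↔ r ≤ ρ ξ)) :
    μ S = ∫⁻ ξ, ENNReal.ofReal (ρ ξ ^ Module.finrank ℝ E / Module.finrank ℝ E) ∂μ.toSphere := by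
  set T : Set (sphere (0 : E) 1 × Ioi (0 : ℝ)) := {q | (q.2 : ℝ) • (q.1 : E) ∈ S}
  have hT : MeasurableSet T := hS.preimage (by fun_prop)
  have hpre : ((↑) ⁻¹' S : Set ({0}ᶜ : Set E)) = homeomorphUnitSphereProd E ⁻¹' T := by
    ext x
    simp [T, smul_inv_smul₀ (norm_ne_zero_iff.2 x.2)]
  have hslice : ∀ ξ, Prod.mk ξ ⁻¹' T = Iic ⟨ρ ξ, hρ ξ⟩ := fun ξ => by
    ext r
    exact hray ξ r r.2
  have hdim : 0 < Module.finrank ℝ E := Module.finrank_pos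
  calc μ S = μ.comap (↑) ((↑) ⁻¹' S : Set ({0}ᶜ : Set E)) := by
        rw [comap_subtype_coe_apply (measurableSet_singleton 0).compl,
          image_preimage_eq_inter_range, Subtype.range_coe, ← sdiff_eq,
          measure_sdiff_null (measure_singleton 0)]
    _ = μ.toSphere.prod (Measure.volumeIoiPow (Module.finrank ℝ E - 1)) T := by
        rw [hpre]
        exact μ.measurePreserving_homeomorphUnitSphereProd.measure_preimage hT.nullMeasurableSet
    _ = ∫⁻ ξ, Measure.volumeIoiPow (Module.finrank ℝ E - 1) (Prod.mk ξ ⁻¹' T) ∂μ.toSphere :=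
        Measure.prod_apply hT
    _ = _ := by
        simp only [hslice, Measure.volumeIoiPow_apply_Iic, Nat.sub_add_cancel hdim,
          Nat.cast_pred hdim, sub_add_cancel]

theorem measure_setOf_le_one_of_homogeneous {g : E → ℝ} {p : ℝ} (hp : 0 < p) (hg : Continuous g)
    (hhom : ∀ r : ℝ, 0 < r → ∀ y, g (r • y) = r ^ p * g y)
    (hpos : ∀ ξ : sphere (0 : E) 1, 0 < g ξ) :
    μ {y | g y ≤ 1} = ENNReal.ofReal
      ((∫ ξ, g ξ ^ (-(Module.finrank ℝ E : ℝ) / p) ∂μ.toSphere) / Module.finrank ℝ E) := by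
  have hray : ∀ ξ : sphere (0 : E) 1, ∀ r : ℝ, 0 < r →
      (r • (ξ : E) ∈ {y | g y ≤ 1} ↔ r ≤ (g ξ)⁻¹ ^ p⁻¹) := fun ξ r hr => by
    rw [mem_ofPred_eq, hhom r hr, le_rpow_inv_iff_of_pos hr.le (inv_nonneg.2 (hpos ξ).le) hp,
      ← one_div, le_div_iff₀ (hpos ξ)]
  have hradial_pow : ∀ ξ : sphere (0 : E) 1, ((g ξ)⁻¹ ^ p⁻¹) ^ Module.finrank ℝ E =
      g ξ ^ (-(Module.finrank ℝ E : ℝ) / p) := fun ξ => by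
    rw [← rpow_natCast, ← rpow_mul (inv_nonneg.2 (hpos ξ).le), inv_rpow (hpos ξ).le,
      ← rpow_neg (hpos ξ).le]
    ring_nf
  have hint : Integrable (fun ξ : sphere (0 : E) 1 =>
      g ξ ^ (-(Module.finrank ℝ E : ℝ) / p) / Module.finrank ℝ E) μ.toSphere :=
    (((hg.comp continuous_subtype_val).rpow_const fun ξ => .inl (hpos ξ).ne').div_const
      _).integrable_of_hasCompactSupport (.of_compactSpace _)
  rw [measure_eq_lintegral_toSphere_of_radial μ (measurableSet_le hg.measurable measurable_const)
      (fun ξ => rpow_pos_of_pos (inv_pos.2 (hpos ξ)) _) hray,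
    ← integral_div, ofReal_integral_eq_lintegral_ofReal hint
      (.of_forall fun ξ => div_nonneg (rpow_nonneg (hpos ξ).le _) (Nat.cast_nonneg _))]
  simp only [hradial_pow]

end Polar

theorem integral_gauge_pow_eq_vol_polar_moment_body_general (n : ℕ) (hn : 2 ≤ n) (p : ℝ) (hp : 1 ≤ p)
    (eps : ℝ)
    (f : EuclideanSpace ℝ (Fin n) → ℝ) (hf_cont : Continuous f)
    (hf_supp : HasCompactSupport f)
    (hpos : ∀ ξ : Metric.sphere (0 : EuclideanSpace ℝ (Fin n)) 1,
      0 < ∫ z, f z * epsPow eps p ⟪(ξ : EuclideanSpace ℝ (Fin n)), z⟫) :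
    (∫ x, f x *
        ((1 / ((n : ℝ) + p)) *
          ∫ ξ : Metric.sphere (0 : EuclideanSpace ℝ (Fin n)) 1,
            (∫ z, f z * epsPow eps p ⟪(ξ : EuclideanSpace ℝ (Fin n)), z⟫) ^
                (-((n : ℝ) + p) / p) *
              epsPow eps p ⟪x, (ξ : EuclideanSpace ℝ (Fin n))⟫
          ∂((volume : Measure (EuclideanSpace ℝ (Fin n))).toSphere))) =
      ((n : ℝ) / ((n : ℝ) + p)) *
        (volume {y : EuclideanSpace ℝ (Fin n) |
          ∫ z, f z * epsPow eps p ⟪y, z⟫ ≤ 1}).toReal := by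
  have hp0 : 0 < p := one_pos.trans_le hp
  have : Nonempty (Fin n) := ⟨⟨0, by omega⟩⟩
  have hmoment : ∀ y, ∫ z, f z * epsPow eps p ⟪y, z⟫ = lpMoment volume eps p f y := fun _ => rfl
  simp only [hmoment] at hpos ⊢
  have hcont : Continuous (lpMoment volume eps p f) :=
    continuous_lpMoment hp0.le hf_cont hf_supp
  have hvol := measure_setOf_le_one_of_homogeneous volume hp0 hcont
    (fun r hr y => lpMoment_smul hr.le y) hpos
  rw [finrank_euclideanSpace_fin] at hvol
  have hw : Continuous fun ξ : sphere (0 : EuclideanSpace ℝ (Fin n)) 1 =>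
      lpMoment volume eps p f ξ ^ (-((n : ℝ) + p) / p) :=
    (hcont.comp continuous_subtype_val).rpow_const fun ξ => .inl (hpos ξ).ne'
  have hexp : ∀ ξ : sphere (0 : EuclideanSpace ℝ (Fin n)) 1,
      lpMoment volume eps p f ξ ^ (-((n : ℝ) + p) / p) * lpMoment volume eps p f ξ =
        lpMoment volume eps p f ξ ^ (-(n : ℝ) / p) := fun ξ => by
    rw [← rpow_add_one (hpos ξ).ne']
    congr 1
    field_simp
    ring
  simp only [mul_left_comm (f _), integral_const_mul,
    integral_mul_integral_epsPow_eq_integral_mul_lpMoment hp0.le hf_cont hf_supp _ hw, hexp, hvol]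
  rw [ENNReal.toReal_ofReal (div_nonneg (integral_nonneg fun ξ => rpow_nonneg (hpos ξ).le _)
    n.cast_nonneg)]
  field_simp

/-- The key computation: `∫ f(x) g(M°_{ε,p} M°_{ε,p} f, x)^p dx = (n/(n+p)) vol(M°_{ε,p} f)`. -/
theorem integral_gauge_pow_eq_vol_polar_moment_body (n : ℕ) (hn : 2 ≤ n) (p : ℝ) (hp : 1 ≤ p)
    (eps : ℝ) (heps0 : 0 ≤ eps) (heps1 : eps ≤ 1)
    (f : EuclideanSpace ℝ (Fin n) → ℝ) (hf_cont : Continuous f)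
    (hf_nonneg : ∀ x, 0 ≤ f x) (hf_supp : HasCompactSupport f) (hf_ne : f ≠ 0)
    (hpos : ∀ ξ : Metric.sphere (0 : EuclideanSpace ℝ (Fin n)) 1,
      0 < ∫ z, f z * epsPow eps p ⟪(ξ : EuclideanSpace ℝ (Fin n)), z⟫) :
    (∫ x, f x *
        ((1 / ((n : ℝ) + p)) *
          ∫ ξ : Metric.sphere (0 : EuclideanSpace ℝ (Fin n)) 1,
            (∫ z, f z * epsPow eps p ⟪(ξ : EuclideanSpace ℝ (Fin n)), z⟫) ^
                (-((n : ℝ) + p) / p) *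
              epsPow eps p ⟪x, (ξ : EuclideanSpace ℝ (Fin n))⟫
          ∂((volume : Measure (EuclideanSpace ℝ (Fin n))).toSphere))) =
      ((n : ℝ) / ((n : ℝ) + p)) *
        (volume {y : EuclideanSpace ℝ (Fin n) |
          ∫ z, f z * epsPow eps p ⟪y, z⟫ ≤ 1}).toReal :=
  integral_gauge_pow_eq_vol_polar_moment_body_general n hn p hp eps f hf_cont hf_supp hpos
end

section
/- Let n ≥ 2 and a, b ∈ (0,1) with a² + b² > 1. If α, x, y ∈ ℝⁿ are nonzero vectors satisfying ⟨x, α⟩ > a‖x‖‖α‖ and ⟨y, −α⟩ > b‖y‖‖α‖, then ⟨x, y⟩ < 0. -/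
open scoped RealInnerProductSpace

set_option maxHeartbeats 1000000 in
/-- Vectors in the open cone of aperture `arccos a` around `α` make a strictly obtuse
angle with vectors in the open cone of aperture `arccos b` around `-α`, when
`a² + b² > 1`. -/
theorem cones_obtuse (n : ℕ) (hn : 2 ≤ n) (a b : ℝ)
    (ha0 : 0 < a) (ha1 : a < 1) (hb0 : 0 < b) (hb1 : b < 1) (hab : 1 < a ^ 2 + b ^ 2)
    (α x y : EuclideanSpace ℝ (Fin n)) (hα : α ≠ 0) (hx : x ≠ 0) (hy : y ≠ 0)
    (hxa : a * ‖x‖ * ‖α‖ < ⟪x, α⟫) (hya : b * ‖y‖ * ‖α‖ < ⟪y, -α⟫) :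
    ⟪x, y⟫ < 0 := by
  have hαn : (0:ℝ) < ‖α‖ := norm_pos_iff.mpr hα
  have hxn : (0:ℝ) < ‖x‖ := norm_pos_iff.mpr hx
  have hyn : (0:ℝ) < ‖y‖ := norm_pos_iff.mpr hy
  set u : EuclideanSpace ℝ (Fin n) := ‖α‖⁻¹ • α with hu
  have hun : ‖u‖ = 1 := by
    rw [hu, norm_smul, norm_inv, norm_norm, inv_mul_cancel₀ hαn.ne']
  have huu : ⟪u, u⟫ = 1 := by
    rw [real_inner_self_eq_norm_sq, hun]; norm_num
  set c := ⟪x, u⟫ with hc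
  set d := ⟪y, u⟫ with hd
  have hxu : c = ‖α‖⁻¹ * ⟪x, α⟫ := by rw [hc, hu, real_inner_smul_right]
  have hyu : d = ‖α‖⁻¹ * ⟪y, α⟫ := by rw [hd, hu, real_inner_smul_right]
  have hya' : b * ‖y‖ * ‖α‖ < -⟪y, α⟫ := by
    have h : ⟪y, -α⟫ = -⟪y, α⟫ := inner_neg_right y α
    linarith [h.le, h.ge]
  have hcu : a * ‖x‖ < c := by
    have h : c * ‖α‖ = ⟪x, α⟫ := by rw [hxu]; field_simp
    have h2 : a * ‖x‖ * ‖α‖ < c * ‖α‖ := by rw [h]; exact hxa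
    exact lt_of_mul_lt_mul_right h2 hαn.le
  have hdu : b * ‖y‖ < -d := by
    have h : (-d) * ‖α‖ = -⟪y, α⟫ := by rw [hyu]; field_simp
    have h2 : b * ‖y‖ * ‖α‖ < (-d) * ‖α‖ := by rw [h]; exact hya'
    exact lt_of_mul_lt_mul_right h2 hαn.le
  have hcpos : 0 < c := lt_trans (by positivity) hcu
  have hepos : 0 < -d := lt_trans (by positivity) hdu
  set x' : EuclideanSpace ℝ (Fin n) := x - c • u with hx'
  set y' : EuclideanSpace ℝ (Fin n) := y - d • u with hy'
  have hxy' : ⟪x', y'⟫ = ⟪x, y⟫ - c * d := by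
    simp only [hx', hy', inner_sub_left, inner_sub_right, real_inner_smul_left,
      real_inner_smul_right, huu, mul_one]
    have key : ⟪u, y⟫ = d := (real_inner_comm y u).trans hd.symm
    have key2 : ⟪x, u⟫ = c := hc.symm
    rw [key, key2]
    ring
  have hnx' : ‖x'‖ ^ 2 = ‖x‖ ^ 2 - c ^ 2 := by
    rw [hx', @norm_sub_sq_real, real_inner_smul_right, ← hc, norm_smul,
      Real.norm_eq_abs, hun]
    rw [mul_pow, sq_abs]
    ring
  have hny' : ‖y'‖ ^ 2 = ‖y‖ ^ 2 - d ^ 2 := by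
    rw [hy', @norm_sub_sq_real, real_inner_smul_right, ← hd, norm_smul,
      Real.norm_eq_abs, hun]
    rw [mul_pow, sq_abs]
    ring
  clear_value x' y' c d u
  have hx'lt : ‖x'‖ ^ 2 < (1 - a ^ 2) * ‖x‖ ^ 2 := by
    rw [hnx']
    nlinarith [pow_lt_pow_left₀ hcu (by positivity : (0:ℝ) ≤ a * ‖x‖) (by norm_num : 2 ≠ 0)]
  have hy'lt : ‖y'‖ ^ 2 < (1 - b ^ 2) * ‖y‖ ^ 2 := by
    rw [hny']
    nlinarith [pow_lt_pow_left₀ hdu (by positivity : (0:ℝ) ≤ b * ‖y‖) (by norm_num : 2 ≠ 0)]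
  have hCS : ⟪x', y'⟫ ≤ ‖x'‖ * ‖y'‖ := real_inner_le_norm x' y'
  have h2 : ‖x'‖ ^ 2 * ‖y'‖ ^ 2 < ((1 - a ^ 2) * ‖x‖ ^ 2) * ((1 - b ^ 2) * ‖y‖ ^ 2) :=
    mul_lt_mul'' hx'lt hy'lt (sq_nonneg ‖x'‖) (sq_nonneg ‖y'‖)
  have h3 : ((1 - a ^ 2) * ‖x‖ ^ 2) * ((1 - b ^ 2) * ‖y‖ ^ 2)
      ≤ (a * ‖x‖ * (b * ‖y‖)) ^ 2 := by
    nlinarith [mul_nonneg (by nlinarith : (0:ℝ) ≤ a ^ 2 + b ^ 2 - 1)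
      (mul_nonneg (sq_nonneg ‖x‖) (sq_nonneg ‖y‖))]
  have h4 : a * ‖x‖ * (b * ‖y‖) < c * (-d) :=
    mul_lt_mul'' hcu hdu (by positivity) (by positivity)
  have h5 : (a * ‖x‖ * (b * ‖y‖)) ^ 2 < (c * (-d)) ^ 2 :=
    pow_lt_pow_left₀ h4 (by positivity) (by norm_num : 2 ≠ 0)
  have hsq : (‖x'‖ * ‖y'‖) ^ 2 < (c * (-d)) ^ 2 := by
    have he : (‖x'‖ * ‖y'‖) ^ 2 = ‖x'‖ ^ 2 * ‖y'‖ ^ 2 := by ring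
    linarith [h2, h3, h5, he.le, he.ge]
  have hPQ : ‖x'‖ * ‖y'‖ < c * (-d) := by
    nlinarith [hsq, mul_nonneg (norm_nonneg x') (norm_nonneg y'), mul_pos hcpos hepos]
  have hfinal : c * (-d) = -(c * d) := by ring
  linarith [hxy'.le, hxy'.ge, hCS, hPQ, hfinal.le, hfinal.ge]
end

section
/- Let n ≥ 2, p ≥ 1, b ∈ (0,1), and let v, α ∈ ℝⁿ be nonzero vectors with ⟨v, α⟩ < 0. Then ∫_{C} (max{⟨v,z⟩, 0})^p dz = +∞, where C = { z ∈ ℝⁿ \ {0} : ⟨z, −α⟩ > b‖z‖‖α‖ } is the open cone of aperture arccos(b) around −α. -/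
open MeasureTheory
open scoped RealInnerProductSpace ENNReal

open Metric in
/-- The integral of `(max{⟨v,z⟩,0})^p` over an open cone around `-α` diverges whenever
`⟨v, α⟩ < 0`. -/
theorem lintegral_cone_eq_top (n : ℕ) (hn : 2 ≤ n) (p : ℝ) (hp : 1 ≤ p) (b : ℝ)
    (hb0 : 0 < b) (hb1 : b < 1) (v α : EuclideanSpace ℝ (Fin n)) (hv : v ≠ 0) (hα : α ≠ 0)
    (hva : ⟪v, α⟫ < 0) :
    ∫⁻ z in {z : EuclideanSpace ℝ (Fin n) | z ≠ 0 ∧ b * ‖z‖ * ‖α‖ < ⟪z, -α⟫},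
      ENNReal.ofReal ((max ⟪v, z⟫ 0) ^ p) = ∞ := by
  have ha : (0:ℝ) < ‖α‖ := norm_pos_iff.2 hα
  set c : ℝ := -⟪v, α⟫ / 2 with hc
  have hcpos : 0 < c := by simp only [hc]; linarith
  -- the good open set around -α
  have hopen : IsOpen {w : EuclideanSpace ℝ (Fin n) |
      b * ‖w‖ * ‖α‖ < ⟪w, -α⟫ ∧ c < ⟪v, w⟫} := by
    have cont1 : Continuous (fun w : EuclideanSpace ℝ (Fin n) => b * ‖w‖ * ‖α‖) := by fun_prop
    have cont2 : Continuous (fun w : EuclideanSpace ℝ (Fin n) => (⟪w, -α⟫ : ℝ)) :=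
      Continuous.inner continuous_id continuous_const
    have cont3 : Continuous (fun w : EuclideanSpace ℝ (Fin n) => (⟪v, w⟫ : ℝ)) :=
      Continuous.inner continuous_const continuous_id
    exact (isOpen_lt cont1 cont2).inter (isOpen_lt continuous_const cont3)
  have hmem : -α ∈ {w : EuclideanSpace ℝ (Fin n) |
      b * ‖w‖ * ‖α‖ < ⟪w, -α⟫ ∧ c < ⟪v, w⟫} := by
    constructor
    · have : ⟪-α, -α⟫ = ‖α‖ * ‖α‖ := by
        rw [inner_neg_neg, real_inner_self_eq_norm_mul_norm]
      rw [this, norm_neg]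
      nlinarith [mul_pos ha ha]
    · have : ⟪v, -α⟫ = -⟪v, α⟫ := by rw [inner_neg_right]
      rw [this, hc]; linarith
  obtain ⟨ε, hε, hball⟩ := Metric.isOpen_iff.1 hopen _ hmem
  set r : ℝ := min ε (‖α‖ / 2) with hr
  have hr0 : 0 < r := lt_min hε (by linarith)
  have hrε : r ≤ ε := min_le_left _ _
  have hra : r ≤ ‖α‖ / 2 := min_le_right _ _
  -- key: scaled balls sit inside the cone with inner product ≥ c
  have key : ∀ k : ℕ, ∀ z ∈ ball ((4:ℝ)^k • (-α)) ((4:ℝ)^k * r),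
      (z ≠ 0 ∧ b * ‖z‖ * ‖α‖ < ⟪z, -α⟫) ∧ c ≤ ⟪v, z⟫ := by
    intro k z hz
    set t : ℝ := (4:ℝ)^k with htdef
    have ht1 : (1:ℝ) ≤ t := one_le_pow₀ (by norm_num)
    have ht0 : (0:ℝ) < t := by linarith
    set w : EuclideanSpace ℝ (Fin n) := t⁻¹ • z with hw
    have hzw : z = t • w := by rw [hw, smul_inv_smul₀ ht0.ne']
    have hwball : w ∈ ball (-α) r := by
      rw [mem_ball] at hz ⊢
      have : dist w (-α) = t⁻¹ * dist z (t • (-α)) := by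
        rw [dist_eq_norm, dist_eq_norm, hw]
        rw [show t⁻¹ • z - -α = t⁻¹ • (z - t • (-α)) by
          rw [smul_sub, smul_smul, inv_mul_cancel₀ ht0.ne', one_smul]]
        rw [norm_smul, Real.norm_eq_abs, abs_of_pos (by positivity)]
      rw [this]
      calc t⁻¹ * dist z (t • (-α)) < t⁻¹ * (t * r) := by
            apply mul_lt_mul_of_pos_left hz (by positivity)
        _ = r := by field_simp
    have hwS := hball (ball_subset_ball hrε hwball)
    obtain ⟨hw1, hw2⟩ := hwS
    have hnz : ‖z‖ = t * ‖w‖ := by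
      rw [hzw, norm_smul, Real.norm_eq_abs, abs_of_pos ht0]
    have hinz : ⟪z, -α⟫ = t * ⟪w, -α⟫ := by rw [hzw, real_inner_smul_left]
    have hivz : ⟪v, z⟫ = t * ⟪v, w⟫ := by rw [hzw, real_inner_smul_right]
    refine ⟨⟨?_, ?_⟩, ?_⟩
    · intro h0
      have hw0 : w = 0 := by rw [hw, h0, smul_zero]
      rw [hw0] at hw1
      simp only [norm_zero, inner_zero_left, mul_zero, zero_mul] at hw1
      exact lt_irrefl 0 hw1
    · rw [hnz, hinz]
      calc b * (t * ‖w‖) * ‖α‖ = t * (b * ‖w‖ * ‖α‖) := by ring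
        _ < t * ⟪w, -α⟫ := by exact mul_lt_mul_of_pos_left hw1 ht0
    · rw [hivz]
      calc c = 1 * c := (one_mul c).symm
        _ ≤ t * ⟪v, w⟫ := by
            apply mul_le_mul ht1 hw2.le hcpos.le (by linarith)
  -- norm bounds on the scaled balls
  have normbd : ∀ k : ℕ, ∀ z ∈ ball ((4:ℝ)^k • (-α)) ((4:ℝ)^k * r),
      (4:ℝ)^k * (‖α‖/2) < ‖z‖ ∧ ‖z‖ < (4:ℝ)^k * (3 * ‖α‖ / 2) := by
    intro k z hz
    set t : ℝ := (4:ℝ)^k with htdef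
    have ht0 : (0:ℝ) < t := by positivity
    rw [mem_ball, dist_eq_norm] at hz
    have h1 : ‖t • (-α : EuclideanSpace ℝ (Fin n))‖ = t * ‖α‖ := by
      rw [norm_smul, Real.norm_eq_abs, abs_of_pos ht0, norm_neg]
    have h2 : ‖t • (-α : EuclideanSpace ℝ (Fin n))‖ - ‖z‖ ≤ ‖z - t • (-α)‖ := by
      have := norm_sub_norm_le (z - t • (-α)) z
      simp at this
      have h3 := norm_sub_norm_le (t • (-α : EuclideanSpace ℝ (Fin n))) z
      calc ‖t • (-α : EuclideanSpace ℝ (Fin n))‖ - ‖z‖ ≤ ‖t • (-α : EuclideanSpace ℝ (Fin n)) - z‖ := h3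
        _ = ‖z - t • (-α)‖ := by rw [norm_sub_rev]
    have h4 : ‖z‖ - ‖t • (-α : EuclideanSpace ℝ (Fin n))‖ ≤ ‖z - t • (-α)‖ :=
      norm_sub_norm_le _ _
    have htr : t * r ≤ t * (‖α‖ / 2) := by
      apply mul_le_mul_of_nonneg_left hra ht0.le
    constructor
    · nlinarith [h1, h2, hz]
    · nlinarith [h1, h4, hz]
  -- disjointness
  have hdisj : Pairwise (Function.onFun Disjoint
      (fun k : ℕ => ball ((4:ℝ)^k • (-α : EuclideanSpace ℝ (Fin n))) ((4:ℝ)^k * r))) := by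
    have base : ∀ k l : ℕ, k < l → Disjoint
        (ball ((4:ℝ)^k • (-α : EuclideanSpace ℝ (Fin n))) ((4:ℝ)^k * r))
        (ball ((4:ℝ)^l • (-α : EuclideanSpace ℝ (Fin n))) ((4:ℝ)^l * r)) := by
      intro k l hkl
      rw [Set.disjoint_left]
      intro z hzk hzl
      have hk := (normbd k z hzk).2
      have hl := (normbd l z hzl).1
      have hpow : (4:ℝ)^(k+1) ≤ (4:ℝ)^l := pow_le_pow_right₀ (by norm_num) hkl
      have : (4:ℝ)^k * (3 * ‖α‖ / 2) < (4:ℝ)^l * (‖α‖ / 2) := by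
        have : (4:ℝ)^(k+1) * (‖α‖/2) ≤ (4:ℝ)^l * (‖α‖/2) := by
          apply mul_le_mul_of_nonneg_right hpow (by positivity)
        have h4k : (4:ℝ)^(k+1) = 4 * (4:ℝ)^k := by ring
        nlinarith [pow_pos (show (0:ℝ) < 4 by norm_num) k]
      linarith
    intro k l hkl
    rcases lt_or_gt_of_ne hkl with h | h
    · exact base k l h
    · exact (base l k h).symm
  -- the chain
  have hsub : (⋃ k : ℕ, ball ((4:ℝ)^k • (-α : EuclideanSpace ℝ (Fin n))) ((4:ℝ)^k * r)) ⊆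
      {z : EuclideanSpace ℝ (Fin n) | z ≠ 0 ∧ b * ‖z‖ * ‖α‖ < ⟪z, -α⟫} := by
    rintro z hz
    obtain ⟨k, hk⟩ := Set.mem_iUnion.1 hz
    exact (key k z hk).1
  refine top_le_iff.1 ?_
  calc (⊤ : ℝ≥0∞) = ∑' _ : ℕ, ENNReal.ofReal (c ^ p) * volume (ball (0 : EuclideanSpace ℝ (Fin n)) r) := by
        rw [ENNReal.tsum_const_eq_top_of_ne_zero]
        apply mul_ne_zero
        · simp [ENNReal.ofReal_eq_zero, not_le]
          exact Real.rpow_pos_of_pos hcpos p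
        · exact (measure_ball_pos volume _ hr0).ne'
    _ ≤ ∑' k : ℕ, ∫⁻ z in ball ((4:ℝ)^k • (-α : EuclideanSpace ℝ (Fin n))) ((4:ℝ)^k * r),
        ENNReal.ofReal ((max ⟪v, z⟫ 0) ^ p) := by
        apply ENNReal.tsum_le_tsum
        intro k
        have h1 : ENNReal.ofReal (c ^ p) * volume (ball (0 : EuclideanSpace ℝ (Fin n)) r)
            ≤ ENNReal.ofReal (c ^ p) *
              volume (ball ((4:ℝ)^k • (-α : EuclideanSpace ℝ (Fin n))) ((4:ℝ)^k * r)) := by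
          apply mul_le_mul_right
          rw [show volume (ball (0 : EuclideanSpace ℝ (Fin n)) r)
              = volume (ball ((4:ℝ)^k • (-α : EuclideanSpace ℝ (Fin n))) r) from
            (Measure.addHaar_ball_center volume _ _).symm]
          apply measure_mono (ball_subset_ball ?_)
          nlinarith [one_le_pow₀ (show (1:ℝ) ≤ 4 by norm_num) (n := k), hr0]
        refine h1.trans ?_
        rw [← setLIntegral_const]
        apply setLIntegral_mono' measurableSet_ball
        intro z hz
        have hcz := (key k z hz).2
        apply ENNReal.ofReal_le_ofReal
        apply Real.rpow_le_rpow hcpos.le ?_ (by linarith)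
        exact le_max_of_le_left hcz
    _ = ∫⁻ z in ⋃ k : ℕ, ball ((4:ℝ)^k • (-α : EuclideanSpace ℝ (Fin n))) ((4:ℝ)^k * r),
        ENNReal.ofReal ((max ⟪v, z⟫ 0) ^ p) := by
        rw [lintegral_iUnion (fun k => measurableSet_ball) hdisj]
    _ ≤ _ := lintegral_mono_set hsub
end

section
/- Let n ≥ 2, p ≥ 1, λ ∈ (1, ∞) with λ' = λ/(λ−1), and let K ⊂ ℝⁿ be a convex body with the origin in its interior, with gauge function g(K,x) = inf{ t > 0 : x ∈ tK }. Then for every nonzero nonnegative continuous function f : ℝⁿ → ℝ with compact support, ‖f‖₁^{n + pλ'} ≤ a_{n,p,λ} ( ∫_{ℝⁿ} f(x) g(K,x)^p dx )^{n} ‖f‖_λ^{pλ'} vol(K)^{p}. -/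
open MeasureTheory Real
open scoped RealInnerProductSpace

/-- The constant `a_{n,p,λ}` for `λ > 1`, with `λ' = λ/(λ-1)`; here
`B(m,l) = Γ(m)Γ(l)/Γ(m+l)` is the Beta function. -/
noncomputable def anpl (n : ℕ) (p lam : ℝ) : ℝ :=
  (((n : ℝ) / p) * ((n : ℝ) / ((lam / (lam - 1)) * p) + 1) ^ (lam / (lam - 1) - 1) *
      ((lam / (lam - 1)) * p / (n : ℝ) + 1) ^ ((n : ℝ) / p) *
      (Real.Gamma ((n : ℝ) / p) * Real.Gamma (lam / (lam - 1)) /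
        Real.Gamma ((n : ℝ) / p + lam / (lam - 1)))) ^ p

/-!
For every `α > 0`, splitting `f = α f g^p + f (1 - α g^p)` and applying Hölder's inequality to
the second part gives `‖f‖₁ ≤ α ∫ f g^p + ‖f‖_λ ‖(1 - α g^p)₊‖_{λ'}`. The sublevel sets of the
gauge are the dilates `r • int K`, so the layer-cake formula evaluates
`∫ (1 - α g^p)₊^{λ'} = α^{-n/p} vol(K) λ' B(λ', n/p + 1)`. Minimising the resulting bound
`α A + C α^{-n/(pλ')}` over `α` yields the inequality, and the constant collapses to `a_{n,p,λ}`.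
-/

open Set Filter Topology ProbabilityTheory
open scoped Pointwise

theorem integral_Ioi_rpow_mul_max_one_sub_rpow {a b : ℝ} (ha : 0 < a) (hb : 0 < b) :
    ∫ x in Ioi (0 : ℝ), x ^ (a - 1) * max (1 - x) 0 ^ b = beta a (b + 1) := by
  have hvanish : ∀ x ∈ Ioi (0 : ℝ) \ Ioc 0 1, x ^ (a - 1) * max (1 - x) 0 ^ b = 0 := by
    rintro x ⟨hx0, hx⟩
    have hx1 : 1 < x := not_le.1 fun h => hx ⟨hx0, h⟩
    rw [max_eq_right (by linarith), zero_rpow hb.ne', mul_zero]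
  have hcomplex :
      Complex.betaIntegral a (b + 1) = ∫ x in (0 : ℝ)..1, x ^ (a - 1) * (1 - x) ^ b := by
    rw [Complex.betaIntegral, ← intervalIntegral.integral_ofReal]
    refine intervalIntegral.integral_congr fun x hx => ?_
    rw [uIcc_of_le zero_le_one] at hx
    push_cast
    rw [Complex.ofReal_cpow hx.1, Complex.ofReal_cpow (by linarith [hx.2])]
    push_cast
    ring_nf
  rw [setIntegral_eq_of_subset_of_forall_sdiff_eq_zero measurableSet_Ioi Ioc_subset_Ioi_self
      hvanish, setIntegral_congr_fun measurableSet_Ioc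
      (g := fun x => x ^ (a - 1) * (1 - x) ^ b) fun x hx => by
        rw [max_eq_left (by linarith [hx.2])],
    ← intervalIntegral.integral_of_le zero_le_one,
    beta_eq_betaIntegralReal a (b + 1) ha (by linarith)]
  exact_mod_cast (congrArg Complex.re hcomplex).symm

theorem integral_Ioi_max_one_sub_rpow_inv_rpow {q D : ℝ} (hq : 0 < q) (hD : 0 < D) :
    ∫ t in Ioi (0 : ℝ), max (1 - t ^ q⁻¹) 0 ^ D = q * beta q (D + 1) := by
  rw [← integral_comp_rpow_Ioi_of_pos hq, ← integral_Ioi_rpow_mul_max_one_sub_rpow hq hD,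
    ← integral_const_mul]
  refine setIntegral_congr_fun measurableSet_Ioi fun x (hx : 0 < x) => ?_
  rw [smul_eq_mul, rpow_rpow_inv hx.le hq.ne', mul_assoc]

theorem lt_max_one_sub_mul_rpow_rpow_iff {t α p q y : ℝ} (ht : 0 < t) (hα : 0 < α) (hp : 0 < p)
    (hq : 0 < q) (hy : 0 ≤ y) :
    t < max (1 - α * y ^ p) 0 ^ q ↔ y < (max (1 - t ^ q⁻¹) 0 / α) ^ p⁻¹ := by
  have hyp : 0 ≤ y ^ p * α := by positivity
  rw [← rpow_inv_lt_iff_of_pos ht.le (le_max_right _ _) hq,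
    lt_max_iff, or_iff_left (rpow_pos_of_pos ht _).not_gt,
    lt_rpow_inv_iff_of_pos hy (by positivity) hp, lt_div_iff₀ hα, lt_max_iff,
    or_iff_left hyp.not_gt]
  constructor <;> intro h <;> linarith

theorem rpow_le_of_forall_le_mul_add_mul_rpow_neg {I A C e : ℝ} (hI : 0 ≤ I) (hA : 0 < A)
    (hC : 0 < C) (he : 0 < e) (h : ∀ α > 0, I ≤ α * A + C * α ^ (-e)) :
    I ^ (1 + e) ≤ (1 + e) ^ (1 + e) / e ^ e * A ^ e * C := by
  -- the minimising `α` balances the two terms: `C * α ^ (-e) = α * A / e`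
  set α := (e * C / A) ^ (1 + e)⁻¹
  have hα : 0 < α := by positivity
  have hαpow : α ^ (1 + e) = e * C / A := rpow_inv_rpow (by positivity) (by positivity)
  have hbalance : C * α ^ (-e) = α * A / e := by
    have : α ^ (-e) = α / α ^ (1 + e) := by
      rw [rpow_add hα, rpow_one, rpow_neg hα.le]
      field_simp
    rw [this, hαpow]
    field_simp
  have hI_le : I ≤ (1 + e) / e * (α * A) :=
    (hbalance ▸ h α hα).trans_eq (by field_simp; ring)
  calc I ^ (1 + e) ≤ ((1 + e) / e * (α * A)) ^ (1 + e) := by gcongr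
    _ = (1 + e) ^ (1 + e) / e ^ (1 + e) * α ^ (1 + e) * A ^ (1 + e) := by
      rw [mul_rpow (by positivity) (by positivity), mul_rpow hα.le hA.le,
        div_rpow (by positivity) he.le, mul_assoc]
    _ = (1 + e) ^ (1 + e) / e ^ e * A ^ e * C := by
      rw [hαpow, rpow_one_add' he.le (by positivity), rpow_one_add' hA.le (by positivity)]
      field_simp

noncomputable def lyzConstant (D q : ℝ) : ℝ :=
  D * (D / q + 1) ^ (q - 1) * (q / D + 1) ^ D * beta D q

theorem anpl_eq_lyzConstant_rpow (n : ℕ) (p lam : ℝ) :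
    anpl n p lam = lyzConstant (n / p) (lam / (lam - 1)) ^ p := by
  rw [anpl, lyzConstant, beta, ← div_div_eq_mul_div, div_div (n : ℝ) p, mul_comm p]

theorem lyzConstant_pos {D q : ℝ} (hD : 0 < D) (hq : 0 < q) : 0 < lyzConstant D q :=
  mul_pos (by positivity) (beta_pos hD hq)

theorem lyzConstant_eq {D q : ℝ} (hD : 0 < D) (hq : 0 < q) :
    lyzConstant D q =
      ((1 + D / q) ^ (1 + D / q) / (D / q) ^ (D / q)) ^ q * (q * beta q (D + 1)) := by
  have he : 0 < D / q := div_pos hD hq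
  have h1e : 0 < 1 + D / q := by linarith
  have hbeta : beta q (D + 1) = D / (q + D) * beta D q := by
    rw [beta, beta, ← add_assoc, Gamma_add_one hD.ne', Gamma_add_one (by positivity),
      add_comm D q]
    field_simp
  rw [lyzConstant, hbeta, div_rpow (by positivity) (by positivity), ← rpow_mul h1e.le,
    ← rpow_mul he.le, div_mul_cancel₀ D hq.ne', add_mul, one_mul, div_mul_cancel₀ D hq.ne',
    show q / D + 1 = (1 + D / q) / (D / q) by field_simp, div_rpow h1e.le he.le,
    rpow_add h1e, add_comm (D / q) 1, rpow_sub_one h1e.ne']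
  field_simp

theorem integral_rpow_pos {X : Type*} [TopologicalSpace X] [MeasurableSpace X]
    [OpensMeasurableSpace X] (μ : Measure X) [μ.IsOpenPosMeasure] [IsFiniteMeasureOnCompacts μ]
    {f : X → ℝ} (hf : Continuous f) (hf0 : ∀ x, 0 ≤ f x)
    (hfc : HasCompactSupport f) (hf_ne : f ≠ 0) {lam : ℝ} (hlam : 0 < lam) :
    0 < ∫ x, f x ^ lam ∂μ := by
  obtain ⟨x, hfx⟩ := Function.ne_iff.1 hf_ne
  exact (hf.rpow_const fun _ => Or.inr hlam.le).integral_pos_of_hasCompactSupport_nonneg_nonzero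
    (hfc.comp_left (g := fun s : ℝ => s ^ lam) (zero_rpow hlam.ne'))
    (fun y => rpow_nonneg (hf0 y) lam) (rpow_pos_of_pos ((hf0 x).lt_of_ne' hfx) lam).ne'

section Gauge

variable {E : Type*} [NormedAddCommGroup E] [NormedSpace ℝ E] {K : Set E}

theorem setOf_gauge_lt_eq_smul_interior (hK : Convex ℝ K) (hK0 : K ∈ 𝓝 0) {r : ℝ} (hr : 0 < r) :
    {x | gauge K x < r} = r • interior K := by
  ext x
  rw [mem_smul_set_iff_inv_smul_mem₀ hr.ne', ← setOfPred_gauge_lt_one_eq_interior hK hK0,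
    mem_ofPred_eq, mem_ofPred_eq, gauge_smul_of_nonneg (inv_nonneg.2 hr.le), smul_eq_mul,
    ← div_eq_inv_mul, div_lt_one hr]

theorem hasCompactSupport_max_one_sub_mul_gauge_rpow (hK : Convex ℝ K) (hKc : IsCompact K)
    (hK0 : K ∈ 𝓝 0) {α p : ℝ} (hα : 0 < α) (hp : 0 < p) :
    HasCompactSupport fun x => max (1 - α * gauge K x ^ p) 0 := by
  set R := α ^ (-p⁻¹) with hR
  have hR0 : 0 < R := by positivity
  refine HasCompactSupport.intro (hKc.smul R) fun x hx => max_eq_right ?_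
  have hRx : R ≤ gauge K x := not_lt.1 fun h => hx <|
    smul_set_mono interior_subset (setOf_gauge_lt_eq_smul_interior hK hK0 hR0 ▸ h)
  have hRp : α * R ^ p = 1 := by
    rw [hR, ← rpow_mul hα.le, neg_mul, inv_mul_cancel₀ hp.ne', rpow_neg_one, mul_inv_cancel₀ hα.ne']
  have := rpow_le_rpow hR0.le hRx hp.le
  nlinarith

variable [MeasurableSpace E] [BorelSpace E] (μ : Measure E)

theorem integral_le_mul_integral_mul_gauge_rpow_add [IsFiniteMeasureOnCompacts μ]
    (hK : Convex ℝ K) (hKc : IsCompact K) (hK0 : K ∈ 𝓝 0) {p lam q α : ℝ} (hp : 0 < p)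
    (hpq : lam.HolderConjugate q) (hα : 0 < α) {f : E → ℝ} (hf : Continuous f)
    (hf0 : ∀ x, 0 ≤ f x) (hfc : HasCompactSupport f) :
    ∫ x, f x ∂μ ≤ α * ∫ x, f x * gauge K x ^ p ∂μ +
      (∫ x, f x ^ lam ∂μ) ^ (1 / lam) * (∫ x, max (1 - α * gauge K x ^ p) 0 ^ q ∂μ) ^ (1 / q) := by
  set h : E → ℝ := fun x => max (1 - α * gauge K x ^ p) 0
  have hgp : Continuous fun x => gauge K x ^ p :=
    (continuous_gauge hK hK0).rpow_const fun _ => Or.inr hp.le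
  have hh : Continuous h := (continuous_const.sub (continuous_const.mul hgp)).max continuous_const
  have hhc : HasCompactSupport h := hasCompactSupport_max_one_sub_mul_gauge_rpow hK hKc hK0 hα hp
  have hfg : Integrable (fun x => α * (f x * gauge K x ^ p)) μ :=
    ((hf.mul hgp).integrable_of_hasCompactSupport hfc.mul_right).const_mul α
  have hfh : Integrable (fun x => f x * h x) μ :=
    (hf.mul hh).integrable_of_hasCompactSupport hfc.mul_right
  calc ∫ x, f x ∂μ ≤ ∫ x, α * (f x * gauge K x ^ p) + f x * h x ∂μ := by
        refine integral_mono (hf.integrable_of_hasCompactSupport hfc) (hfg.add hfh) fun x => ?_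
        have := mul_le_mul_of_nonneg_left (le_max_left (1 - α * gauge K x ^ p) 0) (hf0 x)
        linarith
    _ = α * ∫ x, f x * gauge K x ^ p ∂μ + ∫ x, f x * h x ∂μ := by
        rw [integral_add hfg hfh, integral_const_mul]
    _ ≤ _ := by
        gcongr
        exact integral_mul_le_Lp_mul_Lq_of_nonneg hpq (Eventually.of_forall hf0)
          (Eventually.of_forall fun x => le_max_right _ _) (hf.memLp_of_hasCompactSupport hfc)
          (hh.memLp_of_hasCompactSupport hhc)

theorem integral_mul_gauge_rpow_pos [Nontrivial E] [μ.IsOpenPosMeasure]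
    [IsFiniteMeasureOnCompacts μ] (hK : Convex ℝ K) (hKc : IsCompact K) (hK0 : K ∈ 𝓝 0) {p : ℝ}
    (hp : 0 < p) {f : E → ℝ} (hf : Continuous f) (hf0 : ∀ x, 0 ≤ f x)
    (hfc : HasCompactSupport f) (hf_ne : f ≠ 0) :
    0 < ∫ x, f x * gauge K x ^ p ∂μ := by
  obtain ⟨x, hfx, hx0⟩ : ∃ x, f x ≠ 0 ∧ x ≠ 0 :=
    (dense_compl_singleton 0).inter_open_nonempty _ (isOpen_ne_fun hf continuous_const)
      (Function.ne_iff.1 hf_ne)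
  have hgx : 0 < gauge K x :=
    (gauge_pos (absorbent_nhds_zero hK0) (hKc.isVonNBounded (𝕜 := ℝ))).2 hx0
  exact ((hf.mul ((continuous_gauge hK hK0).rpow_const fun _ => Or.inr hp.le))
    ).integral_pos_of_hasCompactSupport_nonneg_nonzero hfc.mul_right
    (fun y => mul_nonneg (hf0 y) (rpow_nonneg (gauge_nonneg y) p))
    (mul_ne_zero hfx (rpow_pos_of_pos hgx p).ne')

variable [FiniteDimensional ℝ E] [μ.IsAddHaarMeasure]

theorem measureReal_setOf_gauge_lt [Nontrivial E] (hK : Convex ℝ K) (hK0 : K ∈ 𝓝 0) {r : ℝ}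
    (hr : 0 ≤ r) : μ.real {x | gauge K x < r} = r ^ Module.finrank ℝ E * μ.real K := by
  rcases hr.eq_or_lt with rfl | hr
  · have : {x | gauge K x < 0} = ∅ := eq_empty_of_forall_notMem fun x => (gauge_nonneg x).not_gt
    rw [this, measureReal_empty, zero_pow Module.finrank_pos.ne', zero_mul]
  · rw [setOf_gauge_lt_eq_smul_interior hK hK0 hr, measureReal_def,
      Measure.addHaar_smul_of_nonneg μ hr.le,
      measure_interior_of_null_frontier (hK.addHaar_frontier μ), ENNReal.toReal_mul,
      ENNReal.toReal_ofReal (by positivity), measureReal_def]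

theorem measureReal_lt_max_one_sub_mul_gauge_rpow_rpow [Nontrivial E] (hK : Convex ℝ K)
    (hK0 : K ∈ 𝓝 0) {t α p q : ℝ} (ht : 0 < t) (hα : 0 < α) (hp : 0 < p) (hq : 0 < q) :
    μ.real {x | t < max (1 - α * gauge K x ^ p) 0 ^ q} =
      max (1 - t ^ q⁻¹) 0 ^ (Module.finrank ℝ E / p) * α ^ (-(Module.finrank ℝ E / p)) *
        μ.real K := by
  have hM : 0 ≤ max (1 - t ^ q⁻¹) 0 / α := by positivity
  simp_rw [lt_max_one_sub_mul_rpow_rpow_iff ht hα hp hq (gauge_nonneg _)]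
  rw [measureReal_setOf_gauge_lt μ hK hK0 (by positivity), ← rpow_natCast, ← rpow_mul hM,
    inv_mul_eq_div, div_rpow (le_max_right _ _) hα.le, div_eq_mul_inv, ← rpow_neg hα.le]

theorem integral_max_one_sub_mul_gauge_rpow_rpow [Nontrivial E] (hK : Convex ℝ K)
    (hKc : IsCompact K) (hK0 : K ∈ 𝓝 0) {α p q : ℝ} (hα : 0 < α) (hp : 0 < p) (hq : 0 < q) :
    ∫ x, max (1 - α * gauge K x ^ p) 0 ^ q ∂μ =
      α ^ (-(Module.finrank ℝ E / p)) * (μ.real K * (q * beta q (Module.finrank ℝ E / p + 1))) := by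
  have hD : 0 < (Module.finrank ℝ E : ℝ) / p := div_pos (by exact_mod_cast Module.finrank_pos) hp
  have hcont : Continuous fun x => max (1 - α * gauge K x ^ p) 0 ^ q :=
    ((continuous_const.sub (continuous_const.mul ((continuous_gauge hK hK0).rpow_const
      fun _ => Or.inr hp.le))).max continuous_const).rpow_const fun _ => Or.inr hq.le
  have hsupp := (hasCompactSupport_max_one_sub_mul_gauge_rpow hK hKc hK0 hα hp).comp_left
    (g := fun s : ℝ => s ^ q) (zero_rpow hq.ne')
  rw [(hcont.integrable_of_hasCompactSupport hsupp).integral_eq_integral_meas_lt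
      (Eventually.of_forall fun x => rpow_nonneg (le_max_right _ _) q),
    setIntegral_congr_fun measurableSet_Ioi fun t (ht : 0 < t) =>
      measureReal_lt_max_one_sub_mul_gauge_rpow_rpow μ hK hK0 ht hα hp hq,
    integral_mul_const, integral_mul_const, integral_Ioi_max_one_sub_rpow_inv_rpow hq hD]
  ring

theorem integral_rpow_le_lyzConstant_mul [Nontrivial E] (hK : Convex ℝ K) (hKc : IsCompact K)
    (hK0 : K ∈ 𝓝 0) {p lam q : ℝ} (hp : 0 < p) (hpq : lam.HolderConjugate q) {f : E → ℝ}
    (hf : Continuous f) (hf0 : ∀ x, 0 ≤ f x) (hfc : HasCompactSupport f) (hf_ne : f ≠ 0) :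
    (∫ x, f x ∂μ) ^ (q + Module.finrank ℝ E / p) ≤
      lyzConstant (Module.finrank ℝ E / p) q *
        (∫ x, f x * gauge K x ^ p ∂μ) ^ (Module.finrank ℝ E / p) *
        ((∫ x, f x ^ lam ∂μ) ^ (1 / lam)) ^ q * μ.real K := by
  set D : ℝ := Module.finrank ℝ E / p
  have hD : 0 < D := div_pos (by exact_mod_cast Module.finrank_pos) hp
  have hq : 0 < q := hpq.symm.pos
  set I := ∫ x, f x ∂μ
  set A := ∫ x, f x * gauge K x ^ p ∂μ
  set L := (∫ x, f x ^ lam ∂μ) ^ (1 / lam)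
  set M := μ.real K * (q * beta q (D + 1))
  have hI : 0 ≤ I := integral_nonneg hf0
  have hA : 0 < A := integral_mul_gauge_rpow_pos μ hK hKc hK0 hp hf hf0 hfc hf_ne
  have hL : 0 < L := rpow_pos_of_pos (integral_rpow_pos μ hf hf0 hfc hf_ne hpq.pos) _
  have hK_pos : 0 < μ.real K := ENNReal.toReal_pos
    (Measure.measure_pos_of_nonempty_interior μ ⟨0, mem_interior_iff_mem_nhds.2 hK0⟩).ne'
    hKc.measure_lt_top.ne
  have hM : 0 < M := mul_pos hK_pos (mul_pos hq (beta_pos hq (by linarith)))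
  have hbound : ∀ α > 0, I ≤ α * A + L * M ^ (1 / q) * α ^ (-(D / q)) := fun α hα => by
    have := integral_le_mul_integral_mul_gauge_rpow_add μ hK hKc hK0 hp hpq hα hf hf0 hfc
    rwa [integral_max_one_sub_mul_gauge_rpow_rpow μ hK hKc hK0 hα hp hq,
      mul_rpow (by positivity) hM.le, ← rpow_mul hα.le, neg_mul, mul_one_div, mul_comm _ (M ^ _),
      ← mul_assoc] at this
  have hopt := rpow_le_of_forall_le_mul_add_mul_rpow_neg hI hA (by positivity) (div_pos hD hq)
    hbound
  calc I ^ (q + D) = (I ^ (1 + D / q)) ^ q := by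
        rw [← rpow_mul hI]; congr 1; field_simp
    _ ≤ ((1 + D / q) ^ (1 + D / q) / (D / q) ^ (D / q) * A ^ (D / q) * (L * M ^ (1 / q))) ^ q := by
        gcongr
    _ = lyzConstant D q * A ^ D * L ^ q * μ.real K := by
        rw [lyzConstant_eq hD hq, mul_rpow (by positivity) (by positivity),
          mul_rpow (by positivity) (by positivity), mul_rpow hL.le (by positivity),
          ← rpow_mul hA.le, ← rpow_mul hM.le, div_mul_cancel₀ D hq.ne',
          one_div_mul_cancel hq.ne', rpow_one]
        ring

end Gauge

/-- The moment inequality of Lutwak, Yang and Zhang, case `λ ∈ (1, ∞)`: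
`‖f‖₁^{n+pλ'} ≤ a_{n,p,λ} (∫ f(x) g(K,x)^p dx)^n ‖f‖_λ^{pλ'} vol(K)^p`. -/
theorem LYZ_moment_inequality (n : ℕ) (hn : 2 ≤ n) (p : ℝ) (hp : 1 ≤ p)
    (lam : ℝ) (hlam : 1 < lam)
    (K : Set (EuclideanSpace ℝ (Fin n))) (hK_conv : Convex ℝ K)
    (hK_cpt : IsCompact K) (hK_zero : (0 : EuclideanSpace ℝ (Fin n)) ∈ interior K)
    (f : EuclideanSpace ℝ (Fin n) → ℝ) (hf_cont : Continuous f)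
    (hf_nonneg : ∀ x, 0 ≤ f x) (hf_supp : HasCompactSupport f) (hf_ne : f ≠ 0) :
    (∫ x, f x) ^ ((n : ℝ) + p * (lam / (lam - 1))) ≤
      anpl n p lam * (∫ x, f x * gauge K x ^ p) ^ (n : ℝ) *
        ((∫ x, |f x| ^ lam) ^ (1 / lam)) ^ (p * (lam / (lam - 1))) *
        (volume K).toReal ^ p := by
  have hp0 : 0 < p := by linarith
  have : NeZero n := ⟨by omega⟩
  have hpq : lam.HolderConjugate (lam / (lam - 1)) := .conjExponent hlam
  have hcore := integral_rpow_le_lyzConstant_mul volume hK_conv hK_cpt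
    (mem_interior_iff_mem_nhds.1 hK_zero) hp0 hpq hf_cont hf_nonneg hf_supp hf_ne
  rw [finrank_euclideanSpace_fin] at hcore
  have hI : 0 ≤ ∫ x, f x := integral_nonneg hf_nonneg
  have hA : 0 ≤ ∫ x, f x * gauge K x ^ p :=
    integral_nonneg fun x => mul_nonneg (hf_nonneg x) (rpow_nonneg (gauge_nonneg x) p)
  have hL : 0 ≤ (∫ x, f x ^ lam) ^ (1 / lam) :=
    rpow_nonneg (integral_nonneg fun x => rpow_nonneg (hf_nonneg x) lam) _
  have hC : 0 < lyzConstant (n / p) (lam / (lam - 1)) :=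
    lyzConstant_pos (div_pos (Nat.cast_pos.2 (by omega)) hp0) hpq.symm.pos
  simp_rw [abs_of_nonneg (hf_nonneg _)]
  calc (∫ x, f x) ^ ((n : ℝ) + p * (lam / (lam - 1)))
      = ((∫ x, f x) ^ (lam / (lam - 1) + n / p)) ^ p := by
        rw [← rpow_mul hI]; congr 1; field_simp; ring
    _ ≤ _ := rpow_le_rpow (by positivity) hcore hp0.le
    _ = _ := by
        rw [anpl_eq_lyzConstant_rpow, measureReal_def,
          mul_rpow (by positivity) ENNReal.toReal_nonneg, mul_rpow (by positivity) (by positivity), mul_rpow hC.le (by positivity),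
          ← rpow_mul hA, ← rpow_mul hL, div_mul_cancel₀ _ hp0.ne', mul_comm p]
end

section
/- Let n ≥ 2, p ≥ 1, and let K ⊂ ℝⁿ be a convex body with the origin in its interior, with gauge function g(K,x) = inf{ t > 0 : x ∈ tK }. Then for every nonzero nonnegative continuous function f : ℝⁿ → ℝ with compact support, ‖f‖₁^{n + p} ≤ ((n+p)/n)^{n} ( ∫_{ℝⁿ} f(x) g(K,x)^p dx )^{n} ‖f‖_∞^{p} vol(K)^{p}, where ‖f‖_∞ = sup_{x∈ℝⁿ} f(x). Equality holds if and only if f = a·χ_{bK} for some constants a, b > 0, i.e. f is a positive multiple of the characteristic function of a dilate of K. -/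
/-!
Write `V t = vol {f > t}` for `0 < t ≤ M = sup f`, so that `∫ f = ∫₀^M V`. By the bathtub
principle, among sets of a given volume the dilate of `K` minimizes `∫ g(K,·)^p`, and for a dilate
this integral is explicit; hence `∫_{f > t} g(K,·)^p ≥ c V(t)^q` with `q = (n+p)/n`, and
integrating in `t` gives `∫ f g(K,·)^p ≥ c ∫₀^M V^q`. Jensen's inequality for the strictly convex
`x ↦ x^q` bounds `(∫₀^M V)^q` by `M^(q-1) ∫₀^M V^q`, strictly, because for continuous `f` on the
connected space `ℝⁿ` the function `V` is strictly decreasing on `(0, M)`.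

So for continuous `f` the inequality is always strict, while a positive multiple of the indicator
of `bK` is never continuous: both sides of the equality characterization are false.
-/

open MeasureTheory Real
open scoped Pointwise

open Set Filter Topology Module
open scoped ENNReal

theorem setLIntegral_le_setLIntegral_of_measure_le {α : Type*} [MeasurableSpace α]
    {μ : Measure α} {G : α → ℝ≥0∞} {c : ℝ≥0∞} {s A : Set α} (hs : MeasurableSet s)
    (hA : MeasurableSet A) (hs_fin : μ s ≠ ∞) (hμ : μ s ≤ μ A) (hG_le : ∀ x ∈ s, G x ≤ c)
    (hG_ge : ∀ x ∉ s, c ≤ G x) :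
    ∫⁻ x in s, G x ∂μ ≤ ∫⁻ x in A, G x ∂μ := by
  have h_moved : μ (s \ A) ≤ μ (A \ s) := by
    have h_fin : μ (s ∩ A) ≠ ∞ := measure_ne_top_of_subset inter_subset_left hs_fin
    rw [← measure_inter_add_sdiff s hA, ← measure_inter_add_sdiff A hs, inter_comm A] at hμ
    exact (ENNReal.add_le_add_iff_left h_fin).1 hμ
  calc ∫⁻ x in s, G x ∂μ = ∫⁻ x in s ∩ A, G x ∂μ + ∫⁻ x in s \ A, G x ∂μ :=
        (lintegral_inter_add_sdiff G s hA).symm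
    _ ≤ ∫⁻ x in s ∩ A, G x ∂μ + c * μ (s \ A) := by
        rw [← setLIntegral_const]
        gcongr _ + ?_
        exact setLIntegral_mono' (hs.diff hA) fun x hx => hG_le x hx.1
    _ ≤ ∫⁻ x in s ∩ A, G x ∂μ + c * μ (A \ s) := by gcongr
    _ ≤ ∫⁻ x in A ∩ s, G x ∂μ + ∫⁻ x in A \ s, G x ∂μ := by
        rw [inter_comm, ← setLIntegral_const]
        gcongr _ + ?_
        exact setLIntegral_mono' (hA.diff hs) fun x hx => hG_ge x hx.2
    _ = ∫⁻ x in A, G x ∂μ := lintegral_inter_add_sdiff G A hs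

theorem rpow_setIntegral_Ioc_lt_mul_setIntegral_rpow {V : ℝ → ℝ} {M q : ℝ} (hM : 0 < M) (hq : 1 < q)
    (hV_nonneg : ∀ t, 0 ≤ V t) (hV_int : IntegrableOn V (Ioc 0 M))
    (hVq_int : IntegrableOn (fun t => V t ^ q) (Ioc 0 M))
    (hV_nonconst : ∀ c, ¬ V =ᵐ[volume.restrict (Ioc 0 M)] fun _ => c) :
    (∫ t in Ioc 0 M, V t) ^ q < M ^ (q - 1) * ∫ t in Ioc 0 M, V t ^ q := by
  have : IsFiniteMeasure (volume.restrict (Ioc 0 M)) := ⟨by simp⟩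
  have : NeZero (volume.restrict (Ioc 0 M)) := ⟨by simp [hM]⟩
  have h_jensen := ((strictConvexOn_rpow hq).ae_eq_const_or_map_average_lt
    (continuousOn_id.rpow_const fun _ _ => Or.inr (by linarith)) isClosed_Ici
    (ae_of_all _ hV_nonneg) hV_int hVq_int).resolve_left (hV_nonconst _)
  rw [setAverage_eq, setAverage_eq, volume_real_Ioc_of_le hM.le, sub_zero, smul_eq_mul,
    smul_eq_mul, mul_rpow (by positivity)
    (setIntegral_nonneg measurableSet_Ioc fun t _ => hV_nonneg t), inv_rpow hM.le] at h_jensen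
  calc (∫ t in Ioc 0 M, V t) ^ q = M ^ q * ((M ^ q)⁻¹ * (∫ t in Ioc 0 M, V t) ^ q) := by
        field_simp
    _ < M ^ q * (M⁻¹ * ∫ t in Ioc 0 M, V t ^ q) := by gcongr
    _ = M ^ (q - 1) * ∫ t in Ioc 0 M, V t ^ q := by
        rw [rpow_sub_one hM.ne']
        ring

theorem mul_setIntegral_Ioc_sub_pow_mul_rpow (d : ℕ) {p s : ℝ} (hp : 0 < p) (hs : 0 ≤ s) :
    p * ∫ t in Ioc 0 s, (s ^ d - t ^ d) * t ^ (p - 1) = d / (d + p) * s ^ ((d : ℝ) + p) := by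
  have h_split : ∀ t ∈ Ioc 0 s,
      (s ^ d - t ^ d) * t ^ (p - 1) = s ^ d * t ^ (p - 1) - t ^ ((d : ℝ) + p - 1) := by
    intro t ht
    rw [add_sub_assoc, rpow_add ht.1, rpow_natCast]
    ring
  rw [setIntegral_congr_fun measurableSet_Ioc h_split, ← intervalIntegral.integral_of_le hs,
    intervalIntegral.integral_sub
      ((intervalIntegral.intervalIntegrable_rpow' (by linarith)).const_mul _)
      (intervalIntegral.intervalIntegrable_rpow' (by linarith)),
    intervalIntegral.integral_const_mul, integral_rpow (Or.inl (by linarith)),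
    integral_rpow (Or.inl (by linarith)), sub_add_cancel, sub_add_cancel, zero_rpow hp.ne',
    zero_rpow (by positivity), rpow_add' hs (by positivity), rpow_natCast]
  field_simp
  ring

section Distribution

variable {X : Type*} [MeasurableSpace X] (μ : Measure X) (f : X → ℝ)

theorem measurable_measureReal_setOf_lt : Measurable fun t => μ.real {x | t < f x} :=
  (Antitone.measurable (f := fun t => μ {x | t < f x})
    fun _ _ hst => measure_mono fun _ hx => hst.trans_lt hx).ennreal_toReal

variable {μ f}

theorem integral_eq_setIntegral_Ioc_measureReal_setOf_lt (hf_int : Integrable f μ)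
    (hf_nonneg : ∀ x, 0 ≤ f x) {M : ℝ} (hf_le : ∀ x, f x ≤ M) :
    ∫ x, f x ∂μ = ∫ t in Ioc 0 M, μ.real {x | t < f x} := by
  rw [hf_int.integral_eq_integral_meas_lt (ae_of_all _ hf_nonneg)]
  refine setIntegral_eq_of_subset_of_forall_sdiff_eq_zero measurableSet_Ioi Ioc_subset_Ioi_self
    fun t ht => ?_
  have hMt : M < t := lt_of_not_ge fun h => ht.2 ⟨ht.1, h⟩
  have : {x | t < f x} = ∅ := eq_empty_of_forall_notMem fun x hx => (hf_le x).not_gt (hMt.trans hx)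
  rw [this, measureReal_empty]

theorem integrableOn_Ioc_measureReal_setOf_lt_rpow (hf_fin : μ {x | 0 < f x} ≠ ∞) {q : ℝ}
    (hq : 0 ≤ q) (M : ℝ) :
    IntegrableOn (fun t => μ.real {x | t < f x} ^ q) (Ioc 0 M) := by
  refine IntegrableOn.of_bound (by simp)
    ((measurable_measureReal_setOf_lt μ f).pow_const q).aestronglyMeasurable
    (μ.real {x | 0 < f x} ^ q) ?_
  filter_upwards [ae_restrict_mem measurableSet_Ioc] with t ht
  rw [Real.norm_of_nonneg (by positivity)]
  exact rpow_le_rpow measureReal_nonneg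
    (measureReal_mono (fun x hx => ht.1.trans hx) hf_fin) hq

variable [TopologicalSpace X] [OpensMeasurableSpace X] [PreconnectedSpace X] [μ.IsOpenPosMeasure]

theorem measure_setOf_lt_lt_of_lt (hf : Continuous f) {a b : X} {s t : ℝ} (has : f a ≤ s)
    (hst : s < t) (htb : t < f b) (ht_fin : μ {x | t < f x} ≠ ∞) :
    μ {x | t < f x} < μ {x | s < f x} := by
  set U := {x | s < f x ∧ f x < t}
  have hU_open : IsOpen U := (isOpen_lt continuous_const hf).inter (isOpen_lt hf continuous_const)
  obtain ⟨x, hx⟩ : ((s + t) / 2) ∈ range f :=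
    intermediate_value_univ a b hf ⟨by linarith, by linarith⟩
  have hU_pos : 0 < μ U := hU_open.measure_pos μ ⟨x, by constructor <;> linarith⟩
  calc μ {x | t < f x} < μ {x | t < f x} + μ U := ENNReal.lt_add_right ht_fin hU_pos.ne'
    _ = μ ({x | t < f x} ∪ U) :=
        (measure_union (disjoint_left.2 fun x h1 h2 => h2.2.not_gt h1) hU_open.measurableSet).symm
    _ ≤ μ {x | s < f x} := measure_mono (union_subset (fun x hx => hst.trans hx) fun x hx => hx.1)

theorem not_ae_eq_const_measureReal_setOf_lt (hf : Continuous f) {a b : X} (ha : f a = 0)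
    (hb : 0 < f b) (hf_fin : μ {x | 0 < f x} ≠ ∞) (c : ℝ) :
    ¬ (fun t => μ.real {x | t < f x}) =ᵐ[volume.restrict (Ioc 0 (f b))] fun _ => c := by
  intro h_const
  have h_pick : ∀ u v, 0 ≤ u → u < v → v ≤ f b → ∃ t ∈ Ioo u v, μ.real {x | t < f x} = c :=
    fun u v hu huv hv => Measure.exists_mem_of_measure_ne_zero_of_ae (by simp [huv])
      (ae_restrict_of_ae_restrict_of_subset
        (Ioo_subset_Ioc_self.trans (Ioc_subset_Ioc hu hv)) h_const)
  obtain ⟨t₁, ht₁, hV₁⟩ := h_pick 0 (f b / 2) le_rfl (by linarith) (by linarith)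
  obtain ⟨t₂, ht₂, hV₂⟩ := h_pick (f b / 2) (f b) (by linarith) (by linarith) le_rfl
  have h_fin : ∀ t > 0, μ {x | t < f x} ≠ ∞ := fun t ht =>
    measure_ne_top_of_subset (fun x hx => ht.trans hx) hf_fin
  have h_lt := measure_setOf_lt_lt_of_lt hf (μ := μ) (ha.le.trans ht₁.1.le)
    (ht₁.2.trans ht₂.1) ht₂.2 (h_fin t₂ (by linarith [ht₂.1]))
  have := (ENNReal.toReal_lt_toReal (h_fin t₂ (by linarith [ht₂.1])) (h_fin t₁ ht₁.1)).2 h_lt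
  simp only [measureReal_def] at hV₁ hV₂
  linarith

end Distribution

section Gauge

variable {E : Type*} [NormedAddCommGroup E] [NormedSpace ℝ E] {K : Set E}

theorem setOf_gauge_le_eq_smul (hK_conv : Convex ℝ K) (hK_closed : IsClosed K)
    (hK_zero : K ∈ 𝓝 0) {r : ℝ} (hr : 0 < r) : {x | gauge K x ≤ r} = r • K := by
  ext x
  have hK : ∀ y, gauge K y ≤ 1 ↔ y ∈ K := fun y => by
    rw [gauge_le_one_iff_mem_closure hK_conv hK_zero, hK_closed.closure_eq]
  rw [mem_smul_set_iff_inv_smul_mem₀ hr.ne', ← hK, gauge_smul_of_nonneg (inv_nonneg.2 hr.le),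
    smul_eq_mul, inv_mul_le_iff₀ hr, mul_one]
  rfl

variable [FiniteDimensional ℝ E] [MeasurableSpace E] [BorelSpace E] (μ : Measure E)
  [μ.IsAddHaarMeasure]

theorem addHaar_setOf_gauge_le (hK_conv : Convex ℝ K) (hK_closed : IsClosed K)
    (hK_zero : K ∈ 𝓝 0) {r : ℝ} (hr : 0 < r) :
    μ {x | gauge K x ≤ r} = ENNReal.ofReal (r ^ finrank ℝ E) * μ K := by
  rw [setOf_gauge_le_eq_smul hK_conv hK_closed hK_zero hr, Measure.addHaar_smul,
    abs_of_pos (pow_pos hr _)]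

/-- For `s ≤ t` both sides vanish, the right one because `ENNReal.ofReal` truncates at `0`. -/
theorem addHaar_setOf_gauge_le_inter_lt (hK_conv : Convex ℝ K) (hK_cpt : IsCompact K)
    (hK_zero : K ∈ 𝓝 0) {s t : ℝ} (hs : 0 ≤ s) (ht : 0 < t) :
    μ ({x | gauge K x ≤ s} ∩ {x | t < gauge K x}) =
      ENNReal.ofReal ((s ^ finrank ℝ E - t ^ finrank ℝ E) * μ.real K) := by
  rcases le_total s t with hst | hts
  · have : {x | gauge K x ≤ s} ∩ {x | t < gauge K x} = ∅ :=
      eq_empty_of_forall_notMem fun x hx => (hx.1.trans hst).not_gt hx.2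
    rw [this, measure_empty, eq_comm, ENNReal.ofReal_eq_zero]
    exact mul_nonpos_of_nonpos_of_nonneg
      (sub_nonpos.2 (pow_le_pow_left₀ hs hst _)) measureReal_nonneg
  · have hdiff : {x | gauge K x ≤ s} ∩ {x | t < gauge K x} =
        {x | gauge K x ≤ s} \ {x | gauge K x ≤ t} := by
      ext x
      simp [not_le]
    have hsub : {x | gauge K x ≤ t} ⊆ {x | gauge K x ≤ s} := fun x hx => le_trans hx hts
    have hmeas : MeasurableSet {x | gauge K x ≤ t} :=
      measurableSet_le (continuous_gauge hK_conv hK_zero).measurable measurable_const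
    have hK_fin : μ K ≠ ∞ := hK_cpt.measure_lt_top.ne
    have ht_vol := addHaar_setOf_gauge_le μ hK_conv hK_cpt.isClosed hK_zero ht
    rw [hdiff, measure_sdiff hsub hmeas.nullMeasurableSet (by rw [ht_vol]; finiteness), ht_vol,
      addHaar_setOf_gauge_le μ hK_conv hK_cpt.isClosed hK_zero (ht.trans_le hts),
      ← ofReal_measureReal hK_fin, ← ENNReal.ofReal_mul (by positivity),
      ← ENNReal.ofReal_mul (by positivity), ← ENNReal.ofReal_sub _ (by positivity), sub_mul]

theorem lintegral_gauge_rpow_setOf_gauge_le (hK_conv : Convex ℝ K) (hK_cpt : IsCompact K)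
    (hK_zero : K ∈ 𝓝 0) {p : ℝ} (hp : 0 < p) {s : ℝ} (hs : 0 ≤ s) :
    ∫⁻ x in {x | gauge K x ≤ s}, ENNReal.ofReal (gauge K x ^ p) ∂μ =
      ENNReal.ofReal (finrank ℝ E / (finrank ℝ E + p) * s ^ ((finrank ℝ E : ℝ) + p) *
        μ.real K) := by
  set d := finrank ℝ E
  set φ : ℝ → ℝ := fun t => (s ^ d - t ^ d) * t ^ (p - 1) * μ.real K
  have hg := continuous_gauge hK_conv hK_zero
  have h_tail : ∀ t ∈ Ioi (0 : ℝ), μ.restrict {x | gauge K x ≤ s} {x | t < gauge K x} *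
      ENNReal.ofReal (t ^ (p - 1)) = ENNReal.ofReal (φ t) := fun t ht => by
    rw [Measure.restrict_apply (measurableSet_lt measurable_const hg.measurable), inter_comm,
      addHaar_setOf_gauge_le_inter_lt μ hK_conv hK_cpt hK_zero hs ht,
      ← ENNReal.ofReal_mul' (rpow_nonneg (le_of_lt ht) _), mul_right_comm]
  have h_vanish : ∀ t ∈ Ioi s, ENNReal.ofReal (φ t) = 0 := fun t ht => by
    rw [ENNReal.ofReal_eq_zero]
    exact mul_nonpos_of_nonpos_of_nonneg (mul_nonpos_of_nonpos_of_nonneg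
      (sub_nonpos.2 (pow_le_pow_left₀ hs (le_of_lt ht) _))
      (rpow_nonneg (hs.trans (le_of_lt ht)) _)) measureReal_nonneg
  have h_int : IntegrableOn φ (Ioc 0 s) := by
    rw [← intervalIntegrable_iff_integrableOn_Ioc_of_le hs]
    exact ((intervalIntegral.intervalIntegrable_rpow' (by linarith)).continuousOn_mul
      (by fun_prop)).mul_const _
  have h_nonneg : 0 ≤ᵐ[volume.restrict (Ioc 0 s)] φ := by
    filter_upwards [ae_restrict_mem measurableSet_Ioc] with t ht
    exact mul_nonneg (mul_nonneg (sub_nonneg.2 (pow_le_pow_left₀ ht.1.le ht.2 _))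
      (rpow_nonneg ht.1.le _)) measureReal_nonneg
  have h_eval : p * ∫ t in Ioc 0 s, φ t = d / (d + p) * s ^ ((d : ℝ) + p) * μ.real K := by
    rw [integral_mul_const, ← mul_assoc, mul_setIntegral_Ioc_sub_pow_mul_rpow d hp hs]
  rw [lintegral_rpow_eq_lintegral_meas_lt_mul _ (ae_of_all _ gauge_nonneg) hg.aemeasurable hp,
    setLIntegral_congr_fun measurableSet_Ioi h_tail, ← Ioc_union_Ioi_eq_Ioi hs,
    lintegral_union measurableSet_Ioi (Ioc_disjoint_Ioi le_rfl),
    setLIntegral_congr_fun measurableSet_Ioi h_vanish, lintegral_zero, add_zero,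
    ← ofReal_integral_eq_lintegral_ofReal h_int h_nonneg, ← ENNReal.ofReal_mul hp.le, h_eval]

theorem ofReal_measureReal_rpow_le_lintegral_gauge_rpow [Nontrivial E] (hK_conv : Convex ℝ K)
    (hK_cpt : IsCompact K) (hK_zero : K ∈ 𝓝 0) {p : ℝ} (hp : 0 < p) {A : Set E}
    (hA : MeasurableSet A) (hA_fin : μ A ≠ ∞) :
    ENNReal.ofReal (μ.real A ^ ((finrank ℝ E + p) / finrank ℝ E)) ≤
      ENNReal.ofReal ((finrank ℝ E + p) / finrank ℝ E * μ.real K ^ (p / finrank ℝ E)) *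
        ∫⁻ x in A, ENNReal.ofReal (gauge K x ^ p) ∂μ := by
  set d : ℝ := (finrank ℝ E : ℝ)
  have hd : 0 < d := Nat.cast_pos.2 finrank_pos
  have hK_pos : 0 < μ.real K :=
    ENNReal.toReal_pos (μ.measure_pos_of_mem_nhds hK_zero).ne' hK_cpt.measure_lt_top.ne
  rcases (measureReal_nonneg (μ := μ) (s := A)).eq_or_lt with hA0 | hA_pos
  · rw [← hA0, zero_rpow (by positivity), ENNReal.ofReal_zero]
    exact zero_le
  set r := (μ.real A / μ.real K) ^ (1 / d)
  have hr : 0 < r := by positivity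
  have hg := continuous_gauge hK_conv hK_zero
  have h_vol : μ {x | gauge K x ≤ r} = μ A := by
    rw [addHaar_setOf_gauge_le μ hK_conv hK_cpt.isClosed hK_zero hr, ← rpow_natCast,
      ← rpow_mul (by positivity), one_div_mul_cancel hd.ne', rpow_one,
      ← ofReal_measureReal hK_cpt.measure_lt_top.ne, ← ENNReal.ofReal_mul (by positivity),
      div_mul_cancel₀ _ hK_pos.ne', ofReal_measureReal hA_fin]
  have h_bathtub := setLIntegral_le_setLIntegral_of_measure_le
    (measurableSet_le hg.measurable measurable_const) hA (h_vol ▸ hA_fin) h_vol.le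
    (G := fun x => ENNReal.ofReal (gauge K x ^ p)) (c := ENNReal.ofReal (r ^ p))
    (fun x hx => ENNReal.ofReal_le_ofReal (rpow_le_rpow (gauge_nonneg x) hx hp.le))
    (fun x hx => ENNReal.ofReal_le_ofReal (rpow_le_rpow hr.le (le_of_lt (not_le.1 hx)) hp.le))
  rw [lintegral_gauge_rpow_setOf_gauge_le μ hK_conv hK_cpt hK_zero hp hr.le] at h_bathtub
  calc ENNReal.ofReal (μ.real A ^ ((d + p) / d))
      = ENNReal.ofReal ((d + p) / d * μ.real K ^ (p / d)) *
          ENNReal.ofReal (d / (d + p) * r ^ (d + p) * μ.real K) := ?_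
    _ ≤ _ := by gcongr
  rw [← ENNReal.ofReal_mul (by positivity)]
  congr 1
  have h_exp : (d + p) / d = p / d + 1 := by field_simp; ring
  have hr_pow : r ^ (d + p) = (μ.real A / μ.real K) ^ ((d + p) / d) := by
    rw [← rpow_mul (by positivity), one_div_mul_eq_div]
  rw [hr_pow, div_rpow measureReal_nonneg hK_pos.le, h_exp, rpow_add_one hK_pos.ne']
  field_simp
  ring

theorem setIntegral_Ioc_measureReal_setOf_lt_rpow_le [Nontrivial E] (hK_conv : Convex ℝ K)
    (hK_cpt : IsCompact K) (hK_zero : K ∈ 𝓝 0) {p : ℝ} (hp : 0 < p) {f : E → ℝ}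
    (hf_meas : Measurable f) (hf_nonneg : ∀ x, 0 ≤ f x) (hf_fin : μ {x | 0 < f x} ≠ ∞)
    (hfg_int : Integrable (fun x => f x * gauge K x ^ p) μ) (M : ℝ) :
    ∫ t in Ioc 0 M, μ.real {x | t < f x} ^ ((finrank ℝ E + p) / finrank ℝ E) ≤
      (finrank ℝ E + p) / finrank ℝ E * μ.real K ^ (p / finrank ℝ E) *
        ∫ x, f x * gauge K x ^ p ∂μ := by
  set κ : ℝ := (finrank ℝ E + p) / finrank ℝ E * μ.real K ^ (p / finrank ℝ E)
  set G : E → ℝ≥0∞ := fun x => ENNReal.ofReal (gauge K x ^ p)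
  have hG : Measurable G :=
    ((continuous_gauge hK_conv hK_zero).measurable.pow_const p).ennreal_ofReal
  have hA : ∀ t, MeasurableSet {x | t < f x} := fun t => measurableSet_lt measurable_const hf_meas
  have hfg_nonneg : ∀ x, 0 ≤ f x * gauge K x ^ p :=
    fun x => mul_nonneg (hf_nonneg x) (rpow_nonneg (gauge_nonneg x) p)
  have h_layer : ∫⁻ t in Ioi 0, ∫⁻ x in {x | t < f x}, G x ∂μ =
      ENNReal.ofReal (∫ x, f x * gauge K x ^ p ∂μ) := by
    rw [ofReal_integral_eq_lintegral_ofReal hfg_int (ae_of_all _ hfg_nonneg)]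
    have h_density : ∫⁻ x, ENNReal.ofReal (f x * gauge K x ^ p) ∂μ =
        ∫⁻ x, ENNReal.ofReal (f x) ∂μ.withDensity G := by
      rw [lintegral_withDensity_eq_lintegral_mul₀ hG.aemeasurable
        hf_meas.ennreal_ofReal.aemeasurable]
      exact lintegral_congr fun x => by rw [ENNReal.ofReal_mul (hf_nonneg x), mul_comm]; rfl
    rw [h_density, lintegral_eq_lintegral_meas_lt _ (ae_of_all _ hf_nonneg) hf_meas.aemeasurable]
    exact setLIntegral_congr_fun measurableSet_Ioi fun t _ => (withDensity_apply G (hA t)).symm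
  have h_pointwise : ∀ t ∈ Ioc (0 : ℝ) M, ENNReal.ofReal (μ.real {x | t < f x} ^
      ((finrank ℝ E + p) / finrank ℝ E)) ≤ ENNReal.ofReal κ * ∫⁻ x in {x | t < f x}, G x ∂μ :=
    fun t ht => ofReal_measureReal_rpow_le_lintegral_gauge_rpow μ hK_conv hK_cpt hK_zero hp
      (hA t) (measure_ne_top_of_subset (fun x hx => ht.1.trans hx) hf_fin)
  have h_lintegral : ∫⁻ t in Ioc 0 M, ENNReal.ofReal (μ.real {x | t < f x} ^
      ((finrank ℝ E + p) / finrank ℝ E)) ≤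
      ENNReal.ofReal (κ * ∫ x, f x * gauge K x ^ p ∂μ) := calc
    _ ≤ ∫⁻ t in Ioc 0 M, ENNReal.ofReal κ * ∫⁻ x in {x | t < f x}, G x ∂μ :=
        setLIntegral_mono' measurableSet_Ioc h_pointwise
    _ ≤ ∫⁻ t in Ioi 0, ENNReal.ofReal κ * ∫⁻ x in {x | t < f x}, G x ∂μ :=
        lintegral_mono_set Ioc_subset_Ioi_self
    _ = _ := by
        rw [lintegral_const_mul' _ _ ENNReal.ofReal_ne_top, h_layer,
          ← ENNReal.ofReal_mul (by positivity)]
  rw [integral_eq_lintegral_of_nonneg_ae (ae_of_all _ fun t => by positivity)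
    ((measurable_measureReal_setOf_lt μ f).pow_const _).aestronglyMeasurable]
  exact ENNReal.toReal_le_of_le_ofReal
    (mul_nonneg (by positivity) (integral_nonneg hfg_nonneg)) h_lintegral

theorem integral_rpow_lt_integral_mul_gauge_rpow [Nontrivial E] (hK_conv : Convex ℝ K)
    (hK_cpt : IsCompact K) (hK_zero : K ∈ 𝓝 0) {p : ℝ} (hp : 0 < p) {f : E → ℝ}
    (hf_cont : Continuous f) (hf_nonneg : ∀ x, 0 ≤ f x) (hf_supp : HasCompactSupport f)
    (hf_ne : f ≠ 0) :
    (∫ x, f x ∂μ) ^ ((finrank ℝ E : ℝ) + p) <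
      ((finrank ℝ E + p) / finrank ℝ E) ^ (finrank ℝ E : ℝ) *
        (∫ x, f x * gauge K x ^ p ∂μ) ^ (finrank ℝ E : ℝ) * (⨆ x, f x) ^ p * μ.real K ^ p := by
  set d : ℝ := (finrank ℝ E : ℝ)
  have hd : 0 < d := Nat.cast_pos.2 finrank_pos
  have hq : 1 < (d + p) / d := by rw [lt_div_iff₀ hd]; linarith
  obtain ⟨b, hb⟩ := hf_cont.exists_forall_ge_of_hasCompactSupport hf_supp
  have hM : ⨆ x, f x = f b := ciSup_eq_of_forall_le_of_forall_lt_exists_gt hb fun _ hw => ⟨b, hw⟩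
  have hb_pos : 0 < f b := by
    obtain ⟨x, hx⟩ := Function.ne_iff.1 hf_ne
    exact ((hf_nonneg x).lt_of_ne' hx).trans_le (hb x)
  obtain ⟨a, ha⟩ := nonempty_compl.2 hf_supp.isCompact.ne_univ
  have hf_fin : μ {x | 0 < f x} ≠ ∞ := measure_ne_top_of_subset
    (fun x hx => subset_tsupport f (ne_of_gt hx)) hf_supp.measure_lt_top.ne
  have hfg_int : Integrable (fun x => f x * gauge K x ^ p) μ :=
    (hf_cont.mul ((continuous_gauge hK_conv hK_zero).rpow_const fun _ => Or.inr hp.le))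
      |>.integrable_of_hasCompactSupport hf_supp.mul_right
  rw [hM, integral_eq_setIntegral_Ioc_measureReal_setOf_lt
    (hf_cont.integrable_of_hasCompactSupport hf_supp) hf_nonneg hb]
  have h_jensen := rpow_setIntegral_Ioc_lt_mul_setIntegral_rpow hb_pos hq
    (fun t => measureReal_nonneg)
    (by simpa using integrableOn_Ioc_measureReal_setOf_lt_rpow hf_fin zero_le_one (f b))
    (integrableOn_Ioc_measureReal_setOf_lt_rpow hf_fin (by linarith) (f b))
    (not_ae_eq_const_measureReal_setOf_lt hf_cont (image_eq_zero_of_notMem_tsupport ha) hb_pos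
      hf_fin)
  have h_bathtub := setIntegral_Ioc_measureReal_setOf_lt_rpow_le μ hK_conv hK_cpt hK_zero hp
    hf_cont.measurable hf_nonneg hf_fin hfg_int (f b)
  have hJ : 0 ≤ ∫ x, f x * gauge K x ^ p ∂μ :=
    integral_nonneg fun x => mul_nonneg (hf_nonneg x) (rpow_nonneg (gauge_nonneg x) p)
  set q := (d + p) / d
  set I := ∫ t in Ioc 0 (f b), μ.real {x | t < f x}
  set Q := ∫ t in Ioc 0 (f b), μ.real {x | t < f x} ^ q
  set J := ∫ x, f x * gauge K x ^ p ∂μ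
  calc I ^ (d + p) = (I ^ q) ^ d := by
        rw [← rpow_mul (setIntegral_nonneg measurableSet_Ioc fun _ _ => measureReal_nonneg),
          div_mul_cancel₀ _ hd.ne']
    _ < (f b ^ (q - 1) * Q) ^ d := by gcongr
    _ ≤ (f b ^ (q - 1) * (q * μ.real K ^ (p / d) * J)) ^ d := by gcongr
    _ = q ^ d * J ^ d * f b ^ p * μ.real K ^ p := by
        have h_exp : (q - 1) * d = p := by rw [sub_mul, div_mul_cancel₀ _ hd.ne']; ring
        rw [mul_rpow (by positivity) (by positivity), mul_rpow (by positivity) hJ,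
          mul_rpow (by positivity) (by positivity), ← rpow_mul hb_pos.le, h_exp,
          ← rpow_mul measureReal_nonneg, div_mul_cancel₀ _ hd.ne']
        ring

end Gauge

theorem not_continuous_indicator_const {X Y : Type*} [TopologicalSpace X] [PreconnectedSpace X]
    [TopologicalSpace Y] [T1Space Y] [Zero Y] {s : Set X} (hs : s.Nonempty) (hs_univ : s ≠ univ)
    {a : Y} (ha : a ≠ 0) : ¬ Continuous (s.indicator fun _ => a) := by
  intro h
  have h_closed : IsClosed s := by
    have : s = (s.indicator fun _ => a) ⁻¹' {a} := by
      ext x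
      by_cases hx : x ∈ s <;> simp [hx, ha.symm]
    exact this ▸ isClosed_singleton.preimage h
  have h_open : IsOpen s := by
    have : s = (s.indicator fun _ => a) ⁻¹' {0}ᶜ := by
      ext x
      by_cases hx : x ∈ s <;> simp [hx, ha]
    exact this ▸ isOpen_compl_singleton.preimage h
  exact (isClopen_iff.1 ⟨h_closed, h_open⟩).elim hs.ne_empty hs_univ

/-- The moment inequality of Lutwak, Yang and Zhang, case `λ = ∞`, with sharp constant
`((n+p)/n)^n`, together with its equality case: `f` must be a positive multiple of the
characteristic function of a dilate of `K`. -/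
theorem LYZ_moment_inequality_top (n : ℕ) (hn : 2 ≤ n) (p : ℝ) (hp : 1 ≤ p)
    (K : Set (EuclideanSpace ℝ (Fin n))) (hK_conv : Convex ℝ K)
    (hK_cpt : IsCompact K) (hK_zero : (0 : EuclideanSpace ℝ (Fin n)) ∈ interior K)
    (f : EuclideanSpace ℝ (Fin n) → ℝ) (hf_cont : Continuous f)
    (hf_nonneg : ∀ x, 0 ≤ f x) (hf_supp : HasCompactSupport f) (hf_ne : f ≠ 0) :
    (∫ x, f x) ^ ((n : ℝ) + p) ≤
      (((n : ℝ) + p) / n) ^ (n : ℝ) * (∫ x, f x * gauge K x ^ p) ^ (n : ℝ) *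
        (⨆ x, f x) ^ p * (volume K).toReal ^ p ∧
    ((∫ x, f x) ^ ((n : ℝ) + p) =
      (((n : ℝ) + p) / n) ^ (n : ℝ) * (∫ x, f x * gauge K x ^ p) ^ (n : ℝ) *
        (⨆ x, f x) ^ p * (volume K).toReal ^ p ↔
      ∃ a b : ℝ, 0 < a ∧ 0 < b ∧ ∀ x, f x = Set.indicator (b • K) (fun _ => a) x) := by
  have : NeZero n := ⟨by omega⟩
  have h_lt := integral_rpow_lt_integral_mul_gauge_rpow volume hK_conv hK_cpt
    (mem_interior_iff_mem_nhds.1 hK_zero) (by linarith) hf_cont hf_nonneg hf_supp hf_ne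
  rw [finrank_euclideanSpace_fin] at h_lt
  refine ⟨h_lt.le, iff_of_false h_lt.ne ?_⟩
  rintro ⟨a, b, ha, hb, hf⟩
  refine not_continuous_indicator_const (nonempty_of_mem (interior_subset hK_zero)).smul_set
    (hK_cpt.smul b).ne_univ ha.ne' ?_
  exact funext hf ▸ hf_cont
end
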